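/- arXiv:1412.2522 — 2 statements merged into one kernel-verified Lean document; each statement's English description precedes it below -/
import Mathlib

section
/- Positive association (FKG) for the random-cluster measure: if p∈(0,1) and q≥1, then for all increasing functions f,g on {0,1}^E, φ_{p,q}(fg) ≥ φ_{p,q}(f)φ_{p,q}(g). -/
open scoped BigOperators Classical

noncomputable section

/-- Number of connected components (including isolated vertices) of the graph `(V, A)`. -/
def numComp {V : Type} [Fintype V] (A : Finset (Sym2 V)) : ℕ :=
  Nat.card (SimpleGraph.fromEdgeSet (A : Set (Sym2 V))).ConnectedComponent

/-- Random-cluster weight of the configuration with open edge-set `A ⊆ E`. -/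
def rcWeight {V : Type} [Fintype V] (E : Finset (Sym2 V)) (p q : ℝ)
    (A : Finset (Sym2 V)) : ℝ :=
  p ^ A.card * (1 - p) ^ (E.card - A.card) * q ^ numComp A

/-- Random-cluster partition function. -/
def ZRC {V : Type} [Fintype V] (E : Finset (Sym2 V)) (p q : ℝ) : ℝ :=
  ∑ A ∈ E.powerset, rcWeight E p q A

/-- Potts weight `exp(β · #{monochromatic edges})` of a spin configuration `σ`. -/
def pottsWeight {V : Type} [Fintype V] [DecidableEq V] (E : Finset (Sym2 V)) (β : ℝ) (q : ℕ)
    (σ : V → Fin q) : ℝ :=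
  Real.exp (β * ((E.filter (fun e => (e.map σ).IsDiag)).card : ℝ))

/-- Potts partition function. -/
def ZP {V : Type} [Fintype V] [DecidableEq V] (E : Finset (Sym2 V)) (β : ℝ) (q : ℕ) : ℝ :=
  ∑ σ : V → Fin q, pottsWeight E β q σ

/-- The event `F`: the spin configuration `σ` is constant on every open edge of `A`. -/
def consistent {V : Type} (q : ℕ) (σ : V → Fin q) (A : Finset (Sym2 V)) : Prop :=
  ∀ e ∈ A, (e.map σ).IsDiag

/-- Weight of the Potts/random-cluster coupling measure `μ(σ, ω) ∝ ψ(σ) φ_p(ω) 1_F(σ,ω)`. -/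
def muWeight {V : Type} [Fintype V] (E : Finset (Sym2 V)) (p : ℝ) (q : ℕ)
    (σ : V → Fin q) (A : Finset (Sym2 V)) : ℝ :=
  ((q : ℝ) ^ Fintype.card V)⁻¹ * (p ^ A.card * (1 - p) ^ (E.card - A.card)) *
    (if consistent q σ A then 1 else 0)

/-- Normalising constant of the coupling measure. -/
def Zmu {V : Type} [Fintype V] [DecidableEq V] (E : Finset (Sym2 V)) (p : ℝ) (q : ℕ) : ℝ :=
  ∑ σ : V → Fin q, ∑ A ∈ E.powerset, muWeight E p q σ A

/-- Expectation of `f` under the random-cluster measure `φ_{p,q}`. -/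
def rcExp {V : Type} [Fintype V] (E : Finset (Sym2 V)) (p q : ℝ)
    (f : Finset (Sym2 V) → ℝ) : ℝ :=
  (∑ A ∈ E.powerset, rcWeight E p q A * f A) / ZRC E p q

/-!
Opening an edge `uv` lowers the number `k` of clusters by one exactly when `u` and `v` are not yet
connected, which becomes less likely as more edges are open; hence `k` is supermodular. Since
`p ^ |A| (1 - p) ^ (|E| - |A|)` is modular, `q ≥ 1` makes the random-cluster weight
log-supermodular, and the FKG inequality follows from the four functions theorem, after shifting
`f` and `g` by their values at `∅` (which leaves the covariance unchanged) to make them nonnegative.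
-/

namespace SimpleGraph

variable {V : Type*} {G : SimpleGraph V} {u v a b : V}

lemma Reachable.cases_of_sup_edge (h : (G ⊔ edge u v).Reachable a b) :
    G.Reachable a b ∨ (G.Reachable a u ∧ G.Reachable v b) ∨
      (G.Reachable a v ∧ G.Reachable u b) := by
  obtain ⟨p⟩ := h
  induction p with
  | nil => exact .inl .rfl
  | @cons x y z hxy _ ih =>
    rcases (sup_adj _ _ _ _).1 hxy with hG | hE
    · have hxy := hG.reachable
      rcases ih with hr | ⟨h1, h2⟩ | ⟨h1, h2⟩
      · exact .inl (hxy.trans hr)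
      · exact .inr (.inl ⟨hxy.trans h1, h2⟩)
      · exact .inr (.inr ⟨hxy.trans h1, h2⟩)
    · obtain ⟨⟨rfl, rfl⟩ | ⟨rfl, rfl⟩, -⟩ := (edge_adj _ _ _ _).1 hE
      · rcases ih with hr | ⟨h1, h2⟩ | ⟨-, h2⟩
        · exact .inr (.inl ⟨.rfl, hr⟩)
        · exact .inl (h1.symm.trans h2)
        · exact .inl h2
      · rcases ih with hr | ⟨-, h2⟩ | ⟨h1, h2⟩
        · exact .inr (.inr ⟨.rfl, hr⟩)
        · exact .inl h2
        · exact .inl (h1.symm.trans h2)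

lemma ConnectedComponent.eq_or_of_map_sup_edge_eq {c d : G.ConnectedComponent}
    (h : c.map (Hom.ofLE le_sup_left) = d.map (Hom.ofLE (le_sup_left : G ≤ G ⊔ edge u v))) :
    c = d ∨ (c = G.connectedComponentMk u ∧ d = G.connectedComponentMk v) ∨
      (c = G.connectedComponentMk v ∧ d = G.connectedComponentMk u) := by
  induction c, d using ConnectedComponent.ind₂ with
  | h a b =>
    simp only [ConnectedComponent.map_mk, Hom.ofLE_apply, ConnectedComponent.eq] at h ⊢
    rcases h.cases_of_sup_edge with hr | ⟨h1, h2⟩ | ⟨h1, h2⟩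
    · exact .inl hr
    · exact .inr (.inl ⟨h1, h2.symm⟩)
    · exact .inr (.inr ⟨h1, h2.symm⟩)

theorem card_connectedComponent_sup_edge [Finite V] (G : SimpleGraph V) (u v : V)
    [Decidable (G.Reachable u v)] :
    Nat.card G.ConnectedComponent =
      Nat.card (G ⊔ edge u v).ConnectedComponent + if G.Reachable u v then 0 else 1 := by
  set π : G.ConnectedComponent → (G ⊔ edge u v).ConnectedComponent :=
    ConnectedComponent.map (Hom.ofLE le_sup_left)
  have hπ : π.Surjective := ConnectedComponent.surjective_map_ofLE le_sup_left
  split_ifs with huv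
  · have huv' : G.connectedComponentMk u = G.connectedComponentMk v :=
      ConnectedComponent.sound huv
    refine add_zero (Nat.card _) ▸ Nat.card_eq_of_bijective π ⟨fun c d h => ?_, hπ⟩
    rcases ConnectedComponent.eq_or_of_map_sup_edge_eq h with h | ⟨rfl, rfl⟩ | ⟨rfl, rfl⟩
    exacts [h, huv', huv'.symm]
  · set cv := G.connectedComponentMk v
    have hπv : π cv = π (G.connectedComponentMk u) := by
      simp only [π, cv, ConnectedComponent.map_mk, Hom.ofLE_apply, ConnectedComponent.eq]
      have hne : u ≠ v := fun h => huv (h ▸ .rfl)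
      exact (Adj.reachable (by simp [edge_adj, sup_adj, hne])).symm
    have hu : G.connectedComponentMk u ≠ cv := fun h => huv (ConnectedComponent.exact h)
    have hbij : (fun c : {c // c ≠ cv} => π c).Bijective := by
      refine ⟨fun c d h => Subtype.ext ?_, fun y => ?_⟩
      · rcases ConnectedComponent.eq_or_of_map_sup_edge_eq h with h | ⟨-, h⟩ | ⟨h, -⟩
        exacts [h, absurd h d.2, absurd h c.2]
      · obtain ⟨c, rfl⟩ := hπ y
        by_cases hc : c = cv
        · exact ⟨⟨_, hu⟩, by rw [hc, hπv]⟩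
        · exact ⟨⟨c, hc⟩, rfl⟩
    rw [← Nat.card_eq_of_bijective _ hbij, ← Finite.card_option,
      Nat.card_congr (Equiv.optionSubtypeNe cv)]

end SimpleGraph

section NumComp

open SimpleGraph

variable {V : Type} [Fintype V]

lemma numComp_insert (s : Finset (Sym2 V)) (u v : V) :
    numComp s = numComp (insert s(u, v) s) +
      if (fromEdgeSet (s : Set (Sym2 V))).Reachable u v then 0 else 1 := by
  rw [numComp, numComp, Finset.coe_insert, Set.insert_eq, Set.union_comm, fromEdgeSet_union]
  exact card_connectedComponent_sup_edge _ u v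

lemma numComp_insert_add_le (e : Sym2 V) {s t : Finset (Sym2 V)} (hst : s ⊆ t) :
    numComp (insert e s) + numComp t ≤ numComp s + numComp (insert e t) := by
  induction e using Sym2.ind with
  | h u v =>
    have hmono : (fromEdgeSet (s : Set (Sym2 V))).Reachable u v →
        (fromEdgeSet (t : Set (Sym2 V))).Reachable u v :=
      Reachable.mono (fromEdgeSet_mono (Finset.coe_subset.2 hst))
    have hs := numComp_insert s u v
    have ht := numComp_insert t u v
    by_cases hr : (fromEdgeSet (s : Set (Sym2 V))).Reachable u v
    · rw [if_pos hr] at hs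
      rw [if_pos (hmono hr)] at ht
      omega
    · rw [if_neg hr] at hs
      split_ifs at ht <;> omega

lemma numComp_union_add_le (D : Finset (Sym2 V)) {s t : Finset (Sym2 V)} (hst : s ⊆ t) :
    numComp (s ∪ D) + numComp t ≤ numComp s + numComp (t ∪ D) := by
  induction D using Finset.induction with
  | empty => simp
  | insert e D _ ih =>
    have := numComp_insert_add_le e (Finset.union_subset_union hst (Finset.Subset.refl D))
    rw [Finset.union_insert, Finset.union_insert]
    omega

theorem numComp_add_numComp_le (A B : Finset (Sym2 V)) :
    numComp A + numComp B ≤ numComp (A ∩ B) + numComp (A ∪ B) := by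
  have h := numComp_union_add_le (B \ A) (Finset.inter_subset_right : B ∩ A ⊆ A)
  rw [Finset.union_comm, Finset.sdiff_union_inter, Finset.union_sdiff_self_eq_union,
    Finset.inter_comm] at h
  omega

end NumComp

section FKG

open Finset

lemma Finset.sum_mul_sum_sub_sum_mul_sum_of_sub_const {ι : Type*} (s : Finset ι)
    (w f g : ι → ℝ) (a b : ℝ) :
    (∑ i ∈ s, w i) * (∑ i ∈ s, w i * ((f i - a) * (g i - b))) -
        (∑ i ∈ s, w i * (f i - a)) * ∑ i ∈ s, w i * (g i - b) =
      (∑ i ∈ s, w i) * (∑ i ∈ s, w i * (f i * g i)) -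
        (∑ i ∈ s, w i * f i) * ∑ i ∈ s, w i * g i := by
  have hfg : ∀ i ∈ s, w i * ((f i - a) * (g i - b)) =
      w i * (f i * g i) - a * (w i * g i) - b * (w i * f i) + a * b * w i :=
    fun i _ => by ring
  have hf : ∀ i ∈ s, w i * (f i - a) = w i * f i - a * w i := fun i _ => by ring
  have hg : ∀ i ∈ s, w i * (g i - b) = w i * g i - b * w i := fun i _ => by ring
  rw [sum_congr rfl hfg, sum_congr rfl hf, sum_congr rfl hg]
  simp only [sum_add_distrib, sum_sub_distrib, ← mul_sum]
  ring

variable {α : Type*} [DecidableEq α] (u : Finset α) {μ f g : Finset α → ℝ}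

theorem Finset.fkg_powerset (hμ₀ : ∀ s ⊆ u, 0 ≤ μ s) (hf₀ : ∀ s ⊆ u, 0 ≤ f s)
    (hg₀ : ∀ s ⊆ u, 0 ≤ g s) (hf : ∀ s t, s ⊆ t → t ⊆ u → f s ≤ f t)
    (hg : ∀ s t, s ⊆ t → t ⊆ u → g s ≤ g t)
    (hμ : ∀ s ⊆ u, ∀ t ⊆ u, μ s * μ t ≤ μ (s ∩ t) * μ (s ∪ t)) :
    (∑ s ∈ u.powerset, μ s * f s) * ∑ s ∈ u.powerset, μ s * g s ≤
      (∑ s ∈ u.powerset, μ s) * ∑ s ∈ u.powerset, μ s * (f s * g s) := by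
  -- the four functions theorem wants nonnegativity everywhere, hence the precomposition with `· ∩ u`
  have key := u.four_functions_theorem (f₁ := fun s => μ (s ∩ u) * f (s ∩ u))
    (f₂ := fun s => μ (s ∩ u) * g (s ∩ u)) (f₃ := fun s => μ (s ∩ u))
    (f₄ := fun s => μ (s ∩ u) * (f (s ∩ u) * g (s ∩ u)))
    (fun s => mul_nonneg (hμ₀ _ inter_subset_right) (hf₀ _ inter_subset_right))
    (fun s => mul_nonneg (hμ₀ _ inter_subset_right) (hg₀ _ inter_subset_right))
    (fun s => hμ₀ _ inter_subset_right)
    (fun s => mul_nonneg (hμ₀ _ inter_subset_right)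
      (mul_nonneg (hf₀ _ inter_subset_right) (hg₀ _ inter_subset_right)))
    (fun s hs t ht => ?_) subset_rfl subset_rfl
  · have hres (h : Finset α → ℝ) : ∑ s ∈ u.powerset, h (s ∩ u) = ∑ s ∈ u.powerset, h s :=
      sum_congr rfl fun s hs => by rw [inter_eq_left.2 (mem_powerset.1 hs)]
    rwa [powerset_infs_powerset_self, powerset_sups_powerset_self, hres (fun s => μ s * f s),
      hres (fun s => μ s * g s), hres μ, hres (fun s => μ s * (f s * g s))] at key
  · have hst : s ∩ t ⊆ u := inter_subset_left.trans hs
    have hst' : s ∪ t ⊆ u := union_subset hs ht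
    simp only [inter_eq_left.2 hs, inter_eq_left.2 ht, inter_eq_left.2 hst, inter_eq_left.2 hst']
    rw [mul_mul_mul_comm, ← mul_assoc (μ (s ∩ t))]
    exact mul_le_mul (hμ s hs t ht)
      (mul_le_mul (hf _ _ subset_union_left hst') (hg _ _ subset_union_right hst')
        (hg₀ t ht) (hf₀ _ hst'))
      (mul_nonneg (hf₀ s hs) (hg₀ t ht)) (mul_nonneg (hμ₀ _ hst) (hμ₀ _ hst'))

theorem Finset.fkg_powerset_of_monotone (hμ₀ : ∀ s ⊆ u, 0 ≤ μ s)
    (hf : ∀ s t, s ⊆ t → t ⊆ u → f s ≤ f t) (hg : ∀ s t, s ⊆ t → t ⊆ u → g s ≤ g t)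
    (hμ : ∀ s ⊆ u, ∀ t ⊆ u, μ s * μ t ≤ μ (s ∩ t) * μ (s ∪ t)) :
    (∑ s ∈ u.powerset, μ s * f s) * ∑ s ∈ u.powerset, μ s * g s ≤
      (∑ s ∈ u.powerset, μ s) * ∑ s ∈ u.powerset, μ s * (f s * g s) := by
  have h := u.fkg_powerset (f := fun s => f s - f ∅) (g := fun s => g s - g ∅) hμ₀
    (fun s hs => sub_nonneg.2 (hf _ _ (empty_subset s) hs))
    (fun s hs => sub_nonneg.2 (hg _ _ (empty_subset s) hs))
    (fun s t hst ht => sub_le_sub_right (hf s t hst ht) _)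
    (fun s t hst ht => sub_le_sub_right (hg s t hst ht) _) hμ
  have := u.powerset.sum_mul_sum_sub_sum_mul_sum_of_sub_const μ f g (f ∅) (g ∅)
  linarith

end FKG

section RandomCluster

variable {V : Type} [Fintype V] {E A B : Finset (Sym2 V)} {p q : ℝ}

lemma rcWeight_pos (hp : p ∈ Set.Ioo (0 : ℝ) 1) (hq : 0 < q) : 0 < rcWeight E p q A := by
  have : 0 < 1 - p := sub_pos.2 hp.2
  have := hp.1
  unfold rcWeight
  positivity

lemma rcWeight_mul_rcWeight_le (hp₀ : 0 ≤ p) (hp₁ : p ≤ 1) (hq : 1 ≤ q) (hA : A ⊆ E)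
    (hB : B ⊆ E) :
    rcWeight E p q A * rcWeight E p q B ≤ rcWeight E p q (A ∩ B) * rcWeight E p q (A ∪ B) := by
  have : A.card ≤ E.card := Finset.card_le_card hA
  have : B.card ≤ E.card := Finset.card_le_card hB
  have : (A ∪ B).card ≤ E.card := Finset.card_le_card (Finset.union_subset hA hB)
  have : (A ∩ B).card ≤ B.card := Finset.card_le_card Finset.inter_subset_right
  have hcard := Finset.card_union_add_card_inter A B
  have hopen : A.card + B.card = (A ∩ B).card + (A ∪ B).card := by omega
  have hclosed : (E.card - A.card) + (E.card - B.card) =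
      (E.card - (A ∩ B).card) + (E.card - (A ∪ B).card) := by omega
  have h1p : 0 ≤ 1 - p := sub_nonneg.2 hp₁
  calc rcWeight E p q A * rcWeight E p q B
      = p ^ (A.card + B.card) * (1 - p) ^ ((E.card - A.card) + (E.card - B.card)) *
          q ^ (numComp A + numComp B) := by
        simp only [rcWeight, pow_add]; ring
    _ ≤ p ^ ((A ∩ B).card + (A ∪ B).card) *
          (1 - p) ^ ((E.card - (A ∩ B).card) + (E.card - (A ∪ B).card)) *
          q ^ (numComp (A ∩ B) + numComp (A ∪ B)) := by
        rw [hopen, hclosed]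
        exact mul_le_mul_of_nonneg_left (pow_le_pow_right₀ hq (numComp_add_numComp_le A B))
          (by positivity)
    _ = rcWeight E p q (A ∩ B) * rcWeight E p q (A ∪ B) := by
        simp only [rcWeight, pow_add]; ring

end RandomCluster

theorem rc_FKG_general {V : Type} [Fintype V]
    (E : Finset (Sym2 V))
    (p q : ℝ) (hp : p ∈ Set.Ioo (0 : ℝ) 1) (hq : 1 ≤ q)
    (f g : Finset (Sym2 V) → ℝ)
    (hf : ∀ A B : Finset (Sym2 V), A ⊆ B → B ⊆ E → f A ≤ f B)
    (hg : ∀ A B : Finset (Sym2 V), A ⊆ B → B ⊆ E → g A ≤ g B) :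
    rcExp E p q f * rcExp E p q g ≤ rcExp E p q (fun A => f A * g A) := by
  have hw : ∀ A : Finset (Sym2 V), 0 < rcWeight E p q A :=
    fun A => rcWeight_pos hp (zero_lt_one.trans_le hq)
  have hZ : 0 < ZRC E p q :=
    Finset.sum_pos (fun A _ => hw A) ⟨∅, Finset.empty_mem_powerset E⟩
  have hfkg := E.fkg_powerset_of_monotone (fun A _ => (hw A).le) hf hg
    (fun A hA B hB => rcWeight_mul_rcWeight_le hp.1.le hp.2.le hq hA hB)
  unfold rcExp
  rw [div_mul_div_comm, div_le_div_iff₀ (mul_pos hZ hZ) hZ]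
  calc _ ≤ ZRC E p q * (∑ A ∈ E.powerset, rcWeight E p q A * (f A * g A)) * ZRC E p q :=
        mul_le_mul_of_nonneg_right hfkg hZ.le
    _ = _ := by ring

/-- Positive association (FKG) for the random-cluster measure: if `p ∈ (0,1)` and
`q ≥ 1`, then `φ_{p,q}(fg) ≥ φ_{p,q}(f) φ_{p,q}(g)` for increasing `f`, `g`. -/
theorem rc_FKG {V : Type} [Fintype V] [DecidableEq V]
    (E : Finset (Sym2 V)) (hE : ∀ e ∈ E, ¬ e.IsDiag)
    (p q : ℝ) (hp : p ∈ Set.Ioo (0 : ℝ) 1) (hq : 1 ≤ q)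
    (f g : Finset (Sym2 V) → ℝ)
    (hf : ∀ A B : Finset (Sym2 V), A ⊆ B → B ⊆ E → f A ≤ f B)
    (hg : ∀ A B : Finset (Sym2 V), A ⊆ B → B ⊆ E → g A ≤ g B) :
    rcExp E p q f * rcExp E p q g ≤ rcExp E p q (fun A => f A * g A) :=
  rc_FKG_general E p q hp hq f g hf hg
end
end

section
/- If p→0 and q/p→0 (e.g. q=p²), then the random-cluster measures φ_{p,q} on a finite connected graph G converge to the uniform spanning tree measure UST, i.e. the uniform measure on the set of ω whose open edge-set is a spanning tree of G. -/
open scoped BigOperators Classical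

noncomputable section

/-! Writing `q = (q / p) * p` and `k(A) = numComp A`, the weight of `A ⊆ E` factors as
`p ^ |V| * (q / p) * (p ^ (|A| + k(A) - |V|) * (q / p) ^ (k(A) - 1) * (1 - p) ^ (|E| - |A|))`.
Adding an edge lowers the number of components by at most one, so `|A| + k(A) ≥ |V|`, and both
exponents in the second factor vanish exactly when `(V, A)` is connected with `|V| - 1` edges,
i.e. is a spanning tree. After dividing out the common first factor, the weight of every `A`
therefore tends to the indicator that `A` is a spanning tree, and the partition function to the
number of spanning trees. -/

namespace SimpleGraph

variable {V : Type} {G : SimpleGraph V}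

theorem Reachable.of_sup_edge {s t x y : V} (h : (G ⊔ edge s t).Reachable x y) :
    G.Reachable x y ∨ (G.Reachable x s ∧ G.Reachable t y) ∨
      (G.Reachable x t ∧ G.Reachable s y) := by
  obtain ⟨w⟩ := h
  induction w with
  | nil => exact .inl .rfl
  | cons hadj _ ih =>
    rcases hadj with hG | hst
    · have := hG.reachable
      grind [Reachable.trans]
    · rcases (edge_adj ..).mp hst with ⟨⟨rfl, rfl⟩ | ⟨rfl, rfl⟩, -⟩ <;>
        grind [Reachable.rfl, Reachable.symm]

theorem card_connectedComponent_le_card_sup_edge_add_one [Finite V] (s t : V) :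
    Nat.card G.ConnectedComponent ≤ Nat.card (G ⊔ edge s t).ConnectedComponent + 1 := by
  classical
  let f (c : G.ConnectedComponent) : Option (G ⊔ edge s t).ConnectedComponent :=
    if c = G.connectedComponentMk t then none else some (c.map (.ofLE le_sup_left))
  have hf : f.Injective := by
    intro c d hcd
    induction c using ConnectedComponent.ind with | h x
    induction d using ConnectedComponent.ind with | h y
    simp only [f, ConnectedComponent.map_mk] at hcd
    split_ifs at hcd with hx hy hy
    · exact hx.trans hy.symm
    · have hxy := ConnectedComponent.exact (Option.some_injective _ hcd)
      rw [ConnectedComponent.eq] at hx hy ⊢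
      rcases hxy.of_sup_edge with h | ⟨-, h⟩ | ⟨h, -⟩
      exacts [h, absurd h.symm hy, absurd h hx]
  simpa [Finite.card_option] using Nat.card_le_card_of_injective f hf

theorem exists_subset_isTree_fromEdgeSet {E : Finset (Sym2 V)}
    (hE : (fromEdgeSet (E : Set (Sym2 V))).Connected) :
    ∃ B ⊆ E, (fromEdgeSet (B : Set (Sym2 V))).IsTree := by
  classical
  obtain ⟨T, hTE, hT⟩ := hE.exists_isTree_le
  refine ⟨E.filter (· ∈ T.edgeSet), Finset.filter_subset _ _, ?_⟩
  have hT_sub : T.edgeSet ⊆ E := (edgeSet_mono hTE).trans (by simp [edgeSet_fromEdgeSet])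
  have hB : ((E.filter (· ∈ T.edgeSet) : Finset (Sym2 V)) : Set (Sym2 V)) = T.edgeSet := by
    ext e
    simpa using @hT_sub e
  rwa [hB, fromEdgeSet_edgeSet]

end SimpleGraph

open SimpleGraph

section numComp

variable {V : Type} [Fintype V]

theorem card_le_card_add_numComp (A : Finset (Sym2 V)) : Fintype.card V ≤ A.card + numComp A := by
  classical
  induction A using Finset.induction_on with
  | empty =>
    have hinj : (connectedComponentMk (⊥ : SimpleGraph V)).Injective := fun _ _ h =>
      reachable_bot.mp (ConnectedComponent.exact h)
    simpa [numComp, ← Nat.card_eq_fintype_card] using Nat.card_le_card_of_injective _ hinj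
  | insert e A he ih =>
    induction e using Sym2.ind with | h u v
    have hsup : fromEdgeSet ↑(insert s(u, v) A) = fromEdgeSet ↑A ⊔ edge u v := by
      rw [Finset.coe_insert, Set.insert_eq, Set.union_comm, fromEdgeSet_union]; rfl
    have hk := card_connectedComponent_le_card_sup_edge_add_one (G := fromEdgeSet ↑A) u v
    rw [← hsup] at hk
    have := Finset.card_insert_of_notMem he
    unfold numComp at *
    omega

theorem numComp_pos [Nonempty V] (A : Finset (Sym2 V)) : 0 < numComp A :=
  Nat.card_pos

theorem numComp_eq_one_iff_connected (A : Finset (Sym2 V)) :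
    numComp A = 1 ↔ (fromEdgeSet (A : Set (Sym2 V))).Connected := by
  rw [numComp, Nat.card_eq_one_iff_unique, connected_iff]
  refine ⟨fun ⟨hsub, hne⟩ => ⟨fun x y => ConnectedComponent.exact (Subsingleton.elim _ _), ?_⟩,
    fun ⟨hpre, hne⟩ => ⟨hpre.subsingleton_connectedComponent, inferInstance⟩⟩
  obtain ⟨c⟩ := hne
  exact ⟨c.out⟩

theorem isTree_fromEdgeSet_iff {A : Finset (Sym2 V)} (hA : ∀ e ∈ A, ¬ e.IsDiag) :
    (fromEdgeSet (A : Set (Sym2 V))).IsTree ↔ numComp A = 1 ∧ A.card + 1 = Fintype.card V := by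
  have hedges : (fromEdgeSet (A : Set (Sym2 V))).edgeSet = A := by
    rw [edgeSet_fromEdgeSet, sdiff_eq_left, Set.disjoint_left]
    exact hA
  rw [isTree_iff_connected_and_card, numComp_eq_one_iff_connected, hedges, Nat.card_coe_set_eq,
    Set.ncard_coe_finset, Nat.card_eq_fintype_card]

end numComp

open Filter Topology

section scaling

variable {V : Type} [Fintype V]

def rcScaledWeight (E : Finset (Sym2 V)) (p q : ℝ) (A : Finset (Sym2 V)) : ℝ :=
  p ^ (A.card + numComp A - Fintype.card V) * (q / p) ^ (numComp A - 1) *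
    (1 - p) ^ (E.card - A.card)

theorem rcWeight_eq_mul_rcScaledWeight [Nonempty V] (E : Finset (Sym2 V)) {p : ℝ} (hp : p ≠ 0)
    (q : ℝ) (A : Finset (Sym2 V)) :
    rcWeight E p q A = p ^ Fintype.card V * (q / p) * rcScaledWeight E p q A := by
  obtain ⟨a, ha⟩ := Nat.exists_eq_add_of_le (card_le_card_add_numComp A)
  obtain ⟨b, hb⟩ : ∃ b, numComp A = b + 1 := ⟨_, (Nat.succ_pred_eq_of_pos (numComp_pos A)).symm⟩
  have hpow : p ^ A.card * p ^ (b + 1) = p ^ Fintype.card V * p ^ a := by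
    rw [← pow_add, ← pow_add, ← hb, ha]
  rw [rcWeight, rcScaledWeight, ha, Nat.add_sub_cancel_left, hb, Nat.add_sub_cancel]
  set r := q / p
  rw [show q = r * p from (div_mul_cancel₀ q hp).symm, mul_pow]
  linear_combination (1 - p) ^ (E.card - A.card) * r ^ (b + 1) * hpow

theorem rcWeight_div_ZRC [Nonempty V] (E : Finset (Sym2 V)) {p q : ℝ} (hp : p ≠ 0) (hq : q ≠ 0)
    (A : Finset (Sym2 V)) :
    rcWeight E p q A / ZRC E p q =
      rcScaledWeight E p q A / ∑ B ∈ E.powerset, rcScaledWeight E p q B := by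
  simp only [ZRC, rcWeight_eq_mul_rcScaledWeight E hp, ← Finset.mul_sum]
  exact mul_div_mul_left _ _ (by positivity)

theorem tendsto_rcScaledWeight [Nonempty V] {ι : Type*} {l : Filter ι} {p q : ι → ℝ}
    (hp : Tendsto p l (𝓝 0)) (hqp : Tendsto (fun i => q i / p i) l (𝓝 0))
    (E A : Finset (Sym2 V)) :
    Tendsto (fun i => rcScaledWeight E (p i) (q i) A) l
      (𝓝 (if numComp A = 1 ∧ A.card + 1 = Fintype.card V then 1 else 0)) := by
  have hlim := ((hp.pow (A.card + numComp A - Fintype.card V)).mul (hqp.pow (numComp A - 1))).mul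
    ((tendsto_const_nhds (x := (1 : ℝ))).sub hp |>.pow (E.card - A.card))
  have h1 := card_le_card_add_numComp A
  have h2 := numComp_pos A
  have hval : (0 : ℝ) ^ (A.card + numComp A - Fintype.card V) * 0 ^ (numComp A - 1) *
      (1 - 0) ^ (E.card - A.card) =
      if numComp A = 1 ∧ A.card + 1 = Fintype.card V then 1 else 0 := by
    split_ifs with htree
    · rw [show A.card + numComp A - Fintype.card V = 0 by omega, htree.1]
      simp
    · rcases (show A.card + numComp A - Fintype.card V ≠ 0 ∨ numComp A - 1 ≠ 0 by omega)
        with hne | hne <;> simp [zero_pow hne]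
  rw [hval] at hlim
  exact hlim

end scaling

/- In `rc_limit_UST` the binder of `E.powerset.filter (fun B => … (B : Set (Sym2 V)) …)` is
elaborated at type `Set (Sym2 V)`, so the powerset is first pushed into `Finset (Set (Sym2 V))`
through the `Finset` monad. -/
theorem Finset.card_filter_powerset_bind_coe {α : Type*} (E : Finset α) (P : Set α → Prop)
    [DecidablePred P] :
    ((do let B ← E.powerset; pure (B : Set α) : Finset (Set α)).filter P).card =
      (E.powerset.filter (fun B : Finset α => P B)).card := by
  rw [show (do let B ← E.powerset; pure (B : Set α) : Finset (Set α)) =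
      E.powerset.image (↑) from Finset.sup_singleton_apply _ _, Finset.filter_image,
    Finset.card_image_of_injective _ Finset.coe_injective]

theorem rc_limit_UST_general {V : Type} [Fintype V]
    (E : Finset (Sym2 V)) (hE : ∀ e ∈ E, ¬ e.IsDiag)
    (hconn : (SimpleGraph.fromEdgeSet (E : Set (Sym2 V))).Connected)
    (pseq qseq : ℕ → ℝ)
    (hp : ∀ n, pseq n ∈ Set.Ioo (0 : ℝ) 1) (hq : ∀ n, 0 < qseq n)
    (hp0 : Filter.Tendsto pseq Filter.atTop (nhds 0))
    (hqp : Filter.Tendsto (fun n => qseq n / pseq n) Filter.atTop (nhds 0)) :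
    ∀ A ∈ E.powerset,
      Filter.Tendsto (fun n => rcWeight E (pseq n) (qseq n) A / ZRC E (pseq n) (qseq n))
        Filter.atTop
        (nhds (if (SimpleGraph.fromEdgeSet (A : Set (Sym2 V))).IsTree
          then ((E.powerset.filter
            (fun B => (SimpleGraph.fromEdgeSet (B : Set (Sym2 V))).IsTree)).card : ℝ)⁻¹
          else 0)) := by
  have : Nonempty V := hconn.nonempty
  have hlim : ∀ B ∈ E.powerset, Tendsto (fun n => rcScaledWeight E (pseq n) (qseq n) B) atTop
      (𝓝 (if (fromEdgeSet (B : Set (Sym2 V))).IsTree then 1 else 0)) := fun B hB => by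
    have hB : ∀ e ∈ B, ¬ e.IsDiag := fun e he => hE e (Finset.mem_powerset.mp hB he)
    simpa only [isTree_fromEdgeSet_iff hB] using tendsto_rcScaledWeight hp0 hqp E B
  have hsum := tendsto_finsetSum E.powerset hlim
  rw [Finset.sum_boole] at hsum
  obtain ⟨T, hTE, hT⟩ := exists_subset_isTree_fromEdgeSet hconn
  have hcard : ((E.powerset.filter fun B : Finset (Sym2 V) =>
      (fromEdgeSet (B : Set (Sym2 V))).IsTree).card : ℝ) ≠ 0 :=
    Nat.cast_ne_zero.mpr <| Finset.card_ne_zero_of_mem <|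
      Finset.mem_filter.mpr ⟨Finset.mem_powerset.mpr hTE, hT⟩
  intro A hA
  rw [Finset.card_filter_powerset_bind_coe]
  have := (hlim A hA).div hsum hcard
  simp only [ite_div, one_div, zero_div] at this
  exact this.congr fun n => (rcWeight_div_ZRC E (hp n).1.ne' (hq n).ne' A).symm

/-- If `p_n → 0` and `q_n / p_n → 0`, the random-cluster measures `φ_{p_n,q_n}` on a
finite connected graph converge (pointwise) to the uniform spanning tree measure `UST`. -/
theorem rc_limit_UST {V : Type} [Fintype V] [DecidableEq V]
    (E : Finset (Sym2 V)) (hE : ∀ e ∈ E, ¬ e.IsDiag)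
    (hconn : (SimpleGraph.fromEdgeSet (E : Set (Sym2 V))).Connected)
    (pseq qseq : ℕ → ℝ)
    (hp : ∀ n, pseq n ∈ Set.Ioo (0 : ℝ) 1) (hq : ∀ n, 0 < qseq n)
    (hp0 : Filter.Tendsto pseq Filter.atTop (nhds 0))
    (hqp : Filter.Tendsto (fun n => qseq n / pseq n) Filter.atTop (nhds 0)) :
    ∀ A ∈ E.powerset,
      Filter.Tendsto (fun n => rcWeight E (pseq n) (qseq n) A / ZRC E (pseq n) (qseq n))
        Filter.atTop
        (nhds (if (SimpleGraph.fromEdgeSet (A : Set (Sym2 V))).IsTree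
          then ((E.powerset.filter
            (fun B => (SimpleGraph.fromEdgeSet (B : Set (Sym2 V))).IsTree)).card : ℝ)⁻¹
          else 0)) :=
  rc_limit_UST_general E hE hconn pseq qseq hp hq hp0 hqp
end
end
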